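/- arXiv:1903.08703 — 5 statements merged into one kernel-verified Lean document; each statement's English description precedes it below -/
import Mathlib

section
/- Let X be a compact metric space and f : X → X a homeomorphism that is non-wandering (i.e., for every nonempty open set U there exists n ≥ 1 with f^n(U) ∩ U ≠ ∅). Then the set of recurrent points of f (points x such that f^{n_k}(x) → x for some sequence n_k → ∞) is dense in X. -/
/-!
By the Baire category theorem: for `ε > 0` and `N`, the points `x` with `dist (f^[n] x) x < ε`
for some `n ≥ N` form an open set, and a dense one, because a non-wandering map returns to
every small open set at arbitrarily late times. A point in the intersection of these countably
many dense open sets is a cluster point of its own orbit, hence recurrent.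
-/

open Filter Topology Metric Set

def IsNonwandering {X : Type*} [TopologicalSpace X] (f : X → X) : Prop :=
  ∀ U : Set X, IsOpen U → U.Nonempty → ∃ n : ℕ, 1 ≤ n ∧ (f^[n] '' U ∩ U).Nonempty

section Nonwandering

variable {X : Type*} [TopologicalSpace X] {f : X → X}

theorem IsNonwandering.exists_ge_image_iterate_inter_nonempty (hf : Continuous f)
    (hnw : IsNonwandering f) (N : ℕ) {U : Set X} (hU : IsOpen U) (hne : U.Nonempty) :
    ∃ n ≥ N, (f^[n] '' U ∩ U).Nonempty := by
  induction N with
  | zero => exact ⟨0, le_rfl, by simpa using hne⟩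
  | succ N ih =>
    obtain ⟨n, hn, -, ⟨y, hyU, rfl⟩, hny⟩ := ih
    -- A return of `U ∩ f^[n] ⁻¹' U` after `m ≥ 1` steps is a return of `U` after `n + m` steps.
    have hV : IsOpen (U ∩ f^[n] ⁻¹' U) := hU.inter ((hf.iterate n).isOpen_preimage U hU)
    obtain ⟨m, hm, -, ⟨v, hvV, rfl⟩, hmv⟩ := hnw _ hV ⟨y, hyU, hny⟩
    refine ⟨n + m, by omega, f^[n + m] v, mem_image_of_mem _ hvV.1, ?_⟩
    rw [Function.iterate_add_apply]
    exact hmv.2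

end Nonwandering

section AlmostReturn

variable {X : Type*} [PseudoMetricSpace X] {f : X → X}

def almostReturnSet (f : X → X) (ε : ℝ) (N : ℕ) : Set X :=
  {x | ∃ n ≥ N, dist (f^[n] x) x < ε}

theorem isOpen_almostReturnSet (hf : Continuous f) (ε : ℝ) (N : ℕ) :
    IsOpen (almostReturnSet f ε N) := by
  simp only [almostReturnSet, ofPred_exists]
  exact isOpen_iUnion fun n =>
    isOpen_const.and (isOpen_lt ((hf.iterate n).dist continuous_id) continuous_const)

theorem dense_almostReturnSet (hf : Continuous f) (hnw : IsNonwandering f) {ε : ℝ} (hε : 0 < ε)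
    (N : ℕ) : Dense (almostReturnSet f ε N) := by
  refine dense_iff_inter_open.2 fun U hU ⟨u, hu⟩ => ?_
  obtain ⟨n, hn, -, ⟨y, hy, rfl⟩, hny⟩ :=
    hnw.exists_ge_image_iterate_inter_nonempty hf N (hU.inter isOpen_ball)
      ⟨u, hu, mem_ball_self (half_pos hε)⟩
  refine ⟨y, hy.1, n, hn, ?_⟩
  calc dist (f^[n] y) y ≤ dist (f^[n] y) u + dist y u := dist_triangle_right _ _ _
    _ < ε / 2 + ε / 2 := add_lt_add hny.2 hy.2
    _ = ε := add_halves ε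

theorem mapClusterPt_iterate_of_forall_mem_almostReturnSet {x : X}
    (hx : ∀ j N : ℕ, x ∈ almostReturnSet f (1 / (j + 1)) N) :
    MapClusterPt x atTop fun n => f^[n] x := by
  rw [nhds_basis_ball_inv_nat_succ.mapClusterPt_iff_frequently]
  exact fun j _ => frequently_atTop.2 (hx j)

theorem dense_setOf_mapClusterPt_iterate [BaireSpace X] (hf : Continuous f)
    (hnw : IsNonwandering f) : Dense {x | MapClusterPt x atTop fun n => f^[n] x} := by
  have hG : Dense (⋂ p : ℕ × ℕ, almostReturnSet f (1 / (p.1 + 1)) p.2) :=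
    dense_iInter_of_isOpen (fun p => isOpen_almostReturnSet hf _ _)
      (fun p => dense_almostReturnSet hf hnw Nat.one_div_pos_of_nat _)
  refine hG.mono fun x hx => mapClusterPt_iterate_of_forall_mem_almostReturnSet fun j N => ?_
  exact mem_iInter.1 hx (j, N)

end AlmostReturn

theorem nonwandering_recurrent_dense {X : Type*} [MetricSpace X] [CompactSpace X]
    (f : X ≃ₜ X)
    (hnw : ∀ U : Set X, IsOpen U → U.Nonempty →
      ∃ n : ℕ, 1 ≤ n ∧ ((⇑f)^[n] '' U ∩ U).Nonempty) :
    Dense {x : X | ∃ n : ℕ → ℕ, StrictMono n ∧ (∀ k, 1 ≤ n k) ∧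
      Tendsto (fun k => (⇑f)^[n k] x) atTop (𝓝 x)} := by
  refine (dense_setOf_mapClusterPt_iterate f.continuous hnw).mono fun x hx => ?_
  obtain ⟨ψ, hψ, hlim⟩ := hx.tendsto_subseq
  refine ⟨fun k => ψ (k + 1), hψ.comp (strictMono_id.add_const 1), fun k => ?_,
    hlim.comp (tendsto_add_atTop_nat 1)⟩
  exact (Nat.zero_le _).trans_lt (hψ (Nat.succ_pos k))
end

section
/- Let (a_i)_{0 ≤ i ≤ N} be a finite sequence of real numbers with a_0 = 0, |a_{i+1} − a_i| ≤ C for all i, and a_N ≥ (K + 2C)·N_0, where K, C > 0 and N_0 ≥ 1 is an integer. Then there exist indices 0 = m_0 < m_1 < ⋯ < m_{N_0} ≤ N such that a_{m_k} − a_{m_{k-1}} ≥ K for every k = 1, …, N_0. -/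
/-!
Let `m_k` be the first index at which `a` reaches the level `k (K + C)`. As an upward step of `a`
is at most `C`, the value of `a` at `m_k` overshoots that level by at most `C`, so consecutive
values `a (m_k)` differ by at least `(K + C) - C = K`; the levels up to `N0 (K + C)` are all
reached by time `N`.
-/

/-- `0` if `a` never reaches `t` (the junk value `sInf ∅ = 0`). -/
noncomputable def firstHit (a : ℕ → ℝ) (t : ℝ) : ℕ := sInf {i | t ≤ a i}

section FirstHit

variable {a : ℕ → ℝ} {N : ℕ} {C s t : ℝ}

theorem firstHit_zero (h : t ≤ a 0) : firstHit a t = 0 :=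
  Nat.sInf_eq_zero.mpr (Or.inl h)

theorem le_apply_firstHit (hN : t ≤ a N) : t ≤ a (firstHit a t) :=
  Nat.sInf_mem (s := {i | t ≤ a i}) ⟨N, hN⟩

theorem firstHit_le (hN : t ≤ a N) : firstHit a t ≤ N :=
  Nat.sInf_le hN

theorem firstHit_mono (hst : s ≤ t) (hN : t ≤ a N) : firstHit a s ≤ firstHit a t :=
  Nat.sInf_le (hst.trans (le_apply_firstHit hN))

theorem apply_firstHit_le (hup : ∀ i < N, a (i + 1) ≤ a i + C) (h0 : a 0 ≤ t + C)
    (hN : t ≤ a N) : a (firstHit a t) ≤ t + C := by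
  rcases hhit : firstHit a t with _ | j
  · exact h0
  · have hj : j < firstHit a t := by omega
    have hbelow : a j < t := lt_of_not_ge (Nat.notMem_of_lt_sInf hj)
    have hjN : j < N := by have := firstHit_le hN; omega
    linarith [hup j hjN]

theorem firstHit_lt_firstHit (hC : 0 ≤ C) (hup : ∀ i < N, a (i + 1) ≤ a i + C)
    (h0 : a 0 ≤ s + C) (hst : s + C < t) (hN : t ≤ a N) : firstHit a s < firstHit a t := by
  have hs : s ≤ t := by linarith
  refine lt_of_le_of_ne (firstHit_mono hs hN) fun heq => ?_
  have hover := apply_firstHit_le hup h0 (hs.trans hN)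
  have hreach := le_apply_firstHit hN
  rw [heq] at hover
  linarith

end FirstHit

theorem pigeonhole_large_increments_general (a : ℕ → ℝ) (N N0 : ℕ) (C K : ℝ)
    (hC : 0 < C) (hK : 0 < K) (h0 : a 0 = 0)
    (hstep : ∀ i < N, |a (i + 1) - a i| ≤ C)
    (hend : a N ≥ (K + 2 * C) * N0) :
    ∃ m : ℕ → ℕ, m 0 = 0 ∧ (∀ k < N0, m k < m (k + 1)) ∧ m N0 ≤ N ∧
      ∀ k < N0, a (m (k + 1)) - a (m k) ≥ K := by
  set c := K + C
  have hup : ∀ i < N, a (i + 1) ≤ a i + C := fun i hi => by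
    linarith [(abs_le.mp (hstep i hi)).2]
  have hstart : ∀ k : ℕ, a 0 ≤ k * c + C := fun k => by rw [h0]; positivity
  have hreach : ∀ k ≤ N0, (k : ℝ) * c ≤ a N := fun k hk => calc
    (k : ℝ) * c ≤ N0 * c := by gcongr
    _ ≤ (K + 2 * C) * N0 := by nlinarith
    _ ≤ a N := hend
  refine ⟨fun k => firstHit a (k * c), firstHit_zero (by simp [h0]), fun k hk => ?_,
    firstHit_le (hreach N0 le_rfl), fun k hk => ?_⟩
  · exact firstHit_lt_firstHit hC.le hup (hstart k) (by push_cast; linarith) (hreach (k + 1) hk)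
  · have hreached := le_apply_firstHit (hreach (k + 1) hk)
    have hover := apply_firstHit_le hup (hstart k) (hreach k hk.le)
    dsimp only
    push_cast at hreached ⊢
    linarith

theorem pigeonhole_large_increments (a : ℕ → ℝ) (N N0 : ℕ) (C K : ℝ)
    (hC : 0 < C) (hK : 0 < K) (hN0 : 1 ≤ N0) (h0 : a 0 = 0)
    (hstep : ∀ i < N, |a (i + 1) - a i| ≤ C)
    (hend : a N ≥ (K + 2 * C) * N0) :
    ∃ m : ℕ → ℕ, m 0 = 0 ∧ (∀ k < N0, m k < m (k + 1)) ∧ m N0 ≤ N ∧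
      ∀ k < N0, a (m (k + 1)) - a (m k) ≥ K :=
  pigeonhole_large_increments_general a N N0 C K hC hK h0 hstep hend
end

section
/- Let f̃ : ℝ² → ℝ² be a lift of a torus homeomorphism, v ∈ ℝ², and M > 0 such that ⟨f̃^n(ỹ) − ỹ − n v, v⟩ ≤ M for every ỹ ∈ ℝ² and every n ≥ 1 (bounded deviation above along v). Suppose x̃ ∈ ℝ² admits a sequence n_k → ∞ with ⟨f̃^{n_k}(x̃) − x̃ − n_k v, v⟩ → 0. Then for every n ≥ 1, ⟨f̃^n(x̃) − x̃ − n v, v⟩ ≥ −M. -/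
open Filter Topology Metric Set

/-- The plane, serving as universal cover of the 2-torus. -/
abbrev R2 := ℝ × ℝ

/-- Euclidean inner product on the plane. -/
noncomputable def dot2 (u v : R2) : ℝ := u.1 * v.1 + u.2 * v.2

/-- A lift of a torus homeomorphism homotopic to the identity: a homeomorphism of the
plane commuting with all integer translations. -/
def TorusLift (F : R2 → R2) : Prop :=
  IsHomeomorph F ∧ ∀ (x : R2) (m n : ℤ), F (x + ((m : ℝ), (n : ℝ))) = F x + ((m : ℝ), (n : ℝ))

/-- The Misiurewicz–Ziemian rotation set of a lift. -/
def rotSet (F : R2 → R2) : Set R2 :=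
  {v | ∃ (n : ℕ → ℕ) (z : ℕ → R2), StrictMono n ∧ (∀ k, 1 ≤ n k) ∧
    Tendsto (fun k => ((n k : ℝ))⁻¹ • (F^[n k] (z k) - z k)) atTop (𝓝 v)}

/-- A vector is totally irrational if it satisfies no nontrivial integer affine relation. -/
def TotallyIrrational (v : R2) : Prop :=
  ∀ a b c : ℤ, (a : ℝ) * v.1 + (b : ℝ) * v.2 + (c : ℝ) = 0 → a = 0 ∧ b = 0 ∧ c = 0

/-- The 2-torus. -/
abbrev T2 := AddCircle (1 : ℝ) × AddCircle (1 : ℝ)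

/-- The covering projection from the plane to the torus. -/
noncomputable def proj : R2 → T2 := fun x => ((x.1 : AddCircle (1 : ℝ)), (x.2 : AddCircle (1 : ℝ)))

/-!
The deviation is an additive cocycle over `F`: `dev (m + n) x = dev m x + dev n (F^[m] x)`.
Splitting `n_k = n + (n_k - n)` and bounding the second term by `M` gives
`dev n_k x ≤ dev n x + M`, and letting `k → ∞` yields `0 ≤ dev n x + M`.
-/

section Cocycle

variable {α ι : Type*} {f : α → α} {c : ℕ → α → ℝ}

theorem sub_le_cocycle_of_le_of_tendsto (hc : ∀ m n x, c (m + n) x = c m x + c n (f^[m] x))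
    {M : ℝ} (hM : ∀ y n, 1 ≤ n → c n y ≤ M) {x : α} {l : Filter ι} [l.NeBot] {nk : ι → ℕ}
    (hnk : Tendsto nk l atTop) {L : ℝ} (hlim : Tendsto (fun j => c (nk j) x) l (𝓝 L)) (n : ℕ) :
    L - M ≤ c n x := by
  have hbound : ∀ᶠ j in l, c (nk j) x ≤ c n x + M := by
    filter_upwards [hnk.eventually_ge_atTop (n + 1)] with j hj
    obtain ⟨m, hm⟩ := Nat.exists_eq_add_of_le hj
    rw [hm, add_assoc, hc]
    gcongr
    exact hM _ _ (Nat.le_add_right 1 m)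
  linarith [le_of_tendsto hlim hbound]

end Cocycle

noncomputable def deviation (F : R2 → R2) (v : R2) (n : ℕ) (y : R2) : ℝ :=
  dot2 (F^[n] y - y - (n : ℝ) • v) v

theorem deviation_add (F : R2 → R2) (v : R2) (m n : ℕ) (y : R2) :
    deviation F v (m + n) y = deviation F v m y + deviation F v n (F^[m] y) := by
  simp only [deviation, dot2, Function.iterate_add_apply F n m, add_comm m n, Prod.fst_sub,
    Prod.snd_sub, Prod.smul_fst, Prod.smul_snd, smul_eq_mul, Nat.cast_add]
  ring

theorem deviation_bounded_below_of_atkinson_recurrence_general (F : R2 → R2)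
    (v : R2) (M : ℝ)
    (hdev : ∀ (y : R2) (n : ℕ), 1 ≤ n → dot2 (F^[n] y - y - (n : ℝ) • v) v ≤ M)
    (x : R2) (nk : ℕ → ℕ) (hnk : StrictMono nk)
    (hlim : Tendsto (fun j => dot2 (F^[nk j] x - x - (nk j : ℝ) • v) v) atTop (𝓝 0)) :
    ∀ n : ℕ, 1 ≤ n → dot2 (F^[n] x - x - (n : ℝ) • v) v ≥ -M := by
  intro n _
  have h := sub_le_cocycle_of_le_of_tendsto (deviation_add F v) hdev hnk.tendsto_atTop hlim n
  rwa [zero_sub] at h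

theorem deviation_bounded_below_of_atkinson_recurrence (F : R2 → R2) (hF : TorusLift F)
    (v : R2) (M : ℝ) (hM : 0 < M)
    (hdev : ∀ (y : R2) (n : ℕ), 1 ≤ n → dot2 (F^[n] y - y - (n : ℝ) • v) v ≤ M)
    (x : R2) (nk : ℕ → ℕ) (hnk : StrictMono nk) (hnk1 : ∀ j, 1 ≤ nk j)
    (hlim : Tendsto (fun j => dot2 (F^[nk j] x - x - (nk j : ℝ) • v) v) atTop (𝓝 0)) :
    ∀ n : ℕ, 1 ≤ n → dot2 (F^[n] x - x - (n : ℝ) • v) v ≥ -M :=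
  deviation_bounded_below_of_atkinson_recurrence_general F v M hdev x nk hnk hlim
end

section
/- Let f̃ be a lift of a torus homeomorphism homotopic to the identity, with displacement bound C = sup_{z̃} ‖f̃(z̃) − z̃‖. Suppose f̃ has unbounded deviation along a unit vector v, i.e., sup_{n ≥ 1, x̃ ∈ ℝ²} (⟨f̃^n(x̃) − x̃, v⟩ − n·s) = ∞ with s = max{⟨u, v⟩ : u ∈ ρ(f̃)}. Then for every K > 0 there exist a point x ∈ 𝕋² with lift x̃ and an integer n ≥ 1 such that dist_{𝕋²}(f^n(x), x) ≤ 1/K and ⟨f̃^n(x̃) − x̃, v⟩ − n·s ≥ K. -/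
open Filter Topology Metric Set

lemma cell_close {M : ℕ} (hM : 0 < M) {a b : ℝ}
    (h : ⌊(M:ℝ) * Int.fract a⌋ = ⌊(M:ℝ) * Int.fract b⌋) :
    |a - b - ((⌊a⌋ - ⌊b⌋ : ℤ) : ℝ)| < 1 / M := by
  have hM' : (0:ℝ) < M := by exact_mod_cast hM
  have h1 : (M:ℝ) * |Int.fract a - Int.fract b| < 1 := by
    have := Int.abs_sub_lt_one_of_floor_eq_floor h
    rwa [← mul_sub, abs_mul, abs_of_pos hM'] at this
  have h2 : |Int.fract a - Int.fract b| < 1 / M := (lt_div_iff₀' hM').mpr h1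
  have h3 : a - b - ((⌊a⌋ - ⌊b⌋ : ℤ) : ℝ) = Int.fract a - Int.fract b := by
    rw [Int.fract, Int.fract]; push_cast; ring
  rw [h3]; exact h2

theorem almost_periodic_points_with_large_deviation (F : R2 → R2) (hF : TorusLift F)
    (v : R2) (hv : ‖v‖ = 1) (C : ℝ) (hC : ∀ z : R2, ‖F z - z‖ ≤ C)
    (s : ℝ) (hs : IsGreatest ((fun u => dot2 u v) '' rotSet F) s)
    (hunb : ∀ B : ℝ, ∃ (n : ℕ) (x : R2), 1 ≤ n ∧ dot2 (F^[n] x - x) v - (n : ℝ) * s > B) :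
    ∀ K > 0, ∃ (x : R2) (n : ℕ), 1 ≤ n ∧
      (∃ m m' : ℤ, ‖F^[n] x - x - ((m : ℝ), (m' : ℝ))‖ ≤ 1 / K) ∧
      dot2 (F^[n] x - x) v - (n : ℝ) * s ≥ K := by
  intro K hK
  have hC0 : 0 ≤ C := le_trans (norm_nonneg _) (hC 0)
  set C' : ℝ := 2 * C + |s| with hC'def
  have hC'0 : 0 ≤ C' := by positivity
  set M : ℕ := ⌈K⌉₊ with hMdef
  have hM0 : 0 < M := Nat.ceil_pos.mpr hK
  have hKM : K ≤ M := Nat.le_ceil K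
  obtain ⟨n, x, hn1, hnB⟩ := hunb (((M:ℝ) ^ 2 + 1) * (K + C'))
  set ψ : ℕ → ℝ := fun j => dot2 (F^[j] x - x) v - (j : ℝ) * s with hψdef
  -- bounds on v's coordinates
  have hv1 : |v.1| ≤ 1 := by
    rw [← hv, Prod.norm_def]; exact le_max_left _ _
  have hv2 : |v.2| ≤ 1 := by
    rw [← hv, Prod.norm_def]; exact le_max_right _ _
  -- single step bound for ψ
  have hstep : ∀ j, ψ (j + 1) ≤ ψ j + C' := by
    intro j
    have hw : ‖F^[j + 1] x - F^[j] x‖ ≤ C := by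
      rw [Function.iterate_succ_apply']; exact hC _
    set w : R2 := F^[j + 1] x - F^[j] x with hwdef
    have hwp : max |w.1| |w.2| ≤ C := by
      rw [← Real.norm_eq_abs, ← Real.norm_eq_abs, ← Prod.norm_def]; exact hw
    have hw1 : |w.1| ≤ C := le_trans (le_max_left _ _) hwp
    have hw2 : |w.2| ≤ C := le_trans (le_max_right _ _) hwp
    have hdot : dot2 w v ≤ 2 * C := by
      have h1 : w.1 * v.1 ≤ C := by
        calc w.1 * v.1 ≤ |w.1 * v.1| := le_abs_self _
          _ = |w.1| * |v.1| := abs_mul _ _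
          _ ≤ C * 1 := mul_le_mul hw1 hv1 (abs_nonneg _) hC0
          _ = C := mul_one C
      have h2 : w.2 * v.2 ≤ C := by
        calc w.2 * v.2 ≤ |w.2 * v.2| := le_abs_self _
          _ = |w.2| * |v.2| := abs_mul _ _
          _ ≤ C * 1 := mul_le_mul hw2 hv2 (abs_nonneg _) hC0
          _ = C := mul_one C
      simp only [dot2]; linarith
    have hsplit : ψ (j + 1) = ψ j + (dot2 w v - s) := by
      simp only [hψdef, dot2, hwdef, Prod.fst_sub, Prod.snd_sub]
      push_cast; ring
    have : dot2 w v - s ≤ C' := by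
      have : -s ≤ |s| := neg_le_abs s
      simp only [hC'def]; linarith
    linarith
  have hψ0 : ψ 0 = 0 := by simp [hψdef, dot2]
  -- existence of times reaching each level
  have hex : ∀ i : Fin (M ^ 2 + 1), ∃ t : ℕ, (i : ℝ) * (K + C') ≤ ψ t := by
    intro i
    refine ⟨n, le_trans ?_ hnB.le⟩
    have hi : (i : ℝ) ≤ (M : ℝ) ^ 2 + 1 := by
      have := i.isLt
      have : (i : ℕ) ≤ M ^ 2 := Nat.lt_succ_iff.mp this
      have : ((i : ℕ) : ℝ) ≤ ((M ^ 2 : ℕ) : ℝ) := by exact_mod_cast this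
      push_cast at this ⊢; linarith
    exact mul_le_mul_of_nonneg_right hi (by linarith)
  set t : Fin (M ^ 2 + 1) → ℕ := fun i => Nat.find (hex i) with htdef
  have ht_spec : ∀ i : Fin (M ^ 2 + 1), ((i : ℕ) : ℝ) * (K + C') ≤ ψ (t i) :=
    fun i => Nat.find_spec (hex i)
  have ht_min : ∀ i, ∀ u < t i, ψ u < (i : ℝ) * (K + C') := by
    intro i u hu
    have := Nat.find_min (hex i) hu
    linarith [not_le.mp this]
  -- upper bound at hitting time
  have ht_ub : ∀ i, ψ (t i) ≤ (i : ℝ) * (K + C') + C' := by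
    intro i
    rcases Nat.eq_zero_or_pos (t i) with h0 | hpos
    · rw [h0, hψ0]
      have : (0:ℝ) ≤ ((i : ℕ) : ℝ) * (K + C') :=
        mul_nonneg (Nat.cast_nonneg _) (by linarith)
      linarith
    · obtain ⟨u, hu⟩ : ∃ u, t i = u + 1 := ⟨t i - 1, by omega⟩
      have hmin := ht_min i u (by omega)
      have hs1 := hstep u
      rw [hu]
      linarith
  -- monotonicity
  have ht_mono : ∀ i j : Fin (M ^ 2 + 1), (i : ℕ) < (j : ℕ) → t i < t j := by
    intro i j hij
    have hle : t i ≤ t j := by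
      apply Nat.find_min' (hex i)
      refine le_trans ?_ (ht_spec j)
      exact mul_le_mul_of_nonneg_right (by exact_mod_cast hij.le) (by linarith)
    rcases eq_or_lt_of_le hle with he | h
    · exfalso
      have h1 := ht_ub i
      have h2 := ht_spec j
      rw [← he] at h2
      have hij' : ((i : ℕ) : ℝ) + 1 ≤ ((j : ℕ) : ℝ) := by exact_mod_cast hij
      nlinarith [mul_le_mul_of_nonneg_right hij' (by linarith : (0:ℝ) ≤ K + C')]
    · exact h
  -- pigeonhole over cells
  set cell : Fin (M ^ 2 + 1) → ℤ × ℤ := fun i =>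
    (⌊(M : ℝ) * Int.fract (F^[t i] x).1⌋, ⌊(M : ℝ) * Int.fract (F^[t i] x).2⌋) with hcelldef
  have hmaps : ∀ i ∈ (Finset.univ : Finset (Fin (M ^ 2 + 1))),
      cell i ∈ Finset.Ico (0 : ℤ) (M : ℤ) ×ˢ Finset.Ico (0 : ℤ) (M : ℤ) := by
    intro i _
    have hM' : (0:ℝ) < M := by exact_mod_cast hM0
    simp only [hcelldef, Finset.mem_product, Finset.mem_Ico]
    constructor
    · constructor
      · exact Int.floor_nonneg.mpr (mul_nonneg hM'.le (Int.fract_nonneg _))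
      · rw [Int.floor_lt]
        push_cast
        calc (M : ℝ) * Int.fract (F^[t i] x).1 < (M : ℝ) * 1 :=
              (mul_lt_mul_iff_right₀ hM').mpr (Int.fract_lt_one _)
          _ = M := mul_one _
    · constructor
      · exact Int.floor_nonneg.mpr (mul_nonneg hM'.le (Int.fract_nonneg _))
      · rw [Int.floor_lt]
        push_cast
        calc (M : ℝ) * Int.fract (F^[t i] x).2 < (M : ℝ) * 1 :=
              (mul_lt_mul_iff_right₀ hM').mpr (Int.fract_lt_one _)
          _ = M := mul_one _
  have hcard : ((Finset.Ico (0 : ℤ) (M : ℤ)) ×ˢ (Finset.Ico (0 : ℤ) (M : ℤ))).card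
      < (Finset.univ : Finset (Fin (M ^ 2 + 1))).card := by
    rw [Finset.card_product, Int.card_Ico, Finset.card_univ, Fintype.card_fin]
    simp only [sub_zero, Int.toNat_natCast]
    calc M * M = M ^ 2 := (sq M).symm
      _ < M ^ 2 + 1 := Nat.lt_succ_self _
  obtain ⟨a, _, b, _, hab, hcab⟩ :=
    Finset.exists_ne_map_eq_of_card_lt_of_maps_to hcard hmaps
  -- order the pair
  obtain ⟨i, j, hij, hcell⟩ : ∃ i j : Fin (M ^ 2 + 1), (i : ℕ) < (j : ℕ) ∧ cell i = cell j := by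
    rcases lt_or_gt_of_ne hab with h | h
    · exact ⟨a, b, h, hcab⟩
    · exact ⟨b, a, h, hcab.symm⟩
  have htij : t i < t j := ht_mono i j hij
  refine ⟨F^[t i] x, t j - t i, by omega, ?_, ?_⟩
  · -- near-integer recurrence
    have hiter : F^[t j - t i] (F^[t i] x) = F^[t j] x := by
      rw [← Function.iterate_add_apply, Nat.sub_add_cancel htij.le]
    rw [hiter]
    set A := F^[t j] x with hA
    set B := F^[t i] x with hB
    have hc1 : ⌊(M:ℝ) * Int.fract A.1⌋ = ⌊(M:ℝ) * Int.fract B.1⌋ := by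
      have := congrArg Prod.fst hcell
      simpa [hcelldef] using this.symm
    have hc2 : ⌊(M:ℝ) * Int.fract A.2⌋ = ⌊(M:ℝ) * Int.fract B.2⌋ := by
      have := congrArg Prod.snd hcell
      simpa [hcelldef] using this.symm
    refine ⟨⌊A.1⌋ - ⌊B.1⌋, ⌊A.2⌋ - ⌊B.2⌋, ?_⟩
    have h1 := cell_close hM0 hc1
    have h2 := cell_close hM0 hc2
    have hMK : 1 / (M : ℝ) ≤ 1 / K := by
      apply one_div_le_one_div_of_le hK hKM
    rw [Prod.norm_def]
    apply max_le
    · simp only [Prod.fst_sub, Prod.snd_sub, Real.norm_eq_abs]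
      exact le_trans h1.le hMK
    · simp only [Prod.fst_sub, Prod.snd_sub, Real.norm_eq_abs]
      exact le_trans h2.le hMK
  · -- large deviation
    have hiter : F^[t j - t i] (F^[t i] x) = F^[t j] x := by
      rw [← Function.iterate_add_apply, Nat.sub_add_cancel htij.le]
    rw [hiter]
    have heq : dot2 (F^[t j] x - F^[t i] x) v - ((t j - t i : ℕ) : ℝ) * s
        = ψ (t j) - ψ (t i) := by
      simp only [hψdef, dot2, Prod.fst_sub, Prod.snd_sub]
      rw [Nat.cast_sub htij.le]
      ring
    rw [heq]
    have h1 := ht_ub i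
    have h2 := ht_spec j
    have hij' : ((i : ℕ) : ℝ) + 1 ≤ ((j : ℕ) : ℝ) := by exact_mod_cast hij
    nlinarith [mul_le_mul_of_nonneg_right hij' (by linarith : (0:ℝ) ≤ K + C')]
end

section
/- Let X be a compact metric space and f : X → X a homeomorphism that is non-wandering. Then for every nonempty open ball B ⊆ X there exists a nested sequence of nonempty closed sets B ⊇ B_1 ⊇ B_2 ⊇ ⋯ with diam(B_k) ≤ 1/k and an increasing sequence of integers n_1 < n_2 < ⋯ such that f^{n_k}(B_k) ⊆ B_{k−1} for every k (with B_0 = B); consequently the unique point x* ∈ ⋂_k B_k satisfies f^{n_k}(x*) → x*. -/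
/-!
Open sets of a non-wandering map return arbitrarily late: applying the hypothesis to
`U ∩ f^[n] ⁻¹' U` adds return times. Hence every nonempty open set contains a small ball
whose closure returns into the set at a time later than any prescribed one. Repeating this
with radii `1/(k+1)` gives nested compact sets `B k` with return times `n k` and
`f^[n (k+1)] (B (k+1)) ⊆ B k`; a point `x` of their intersection satisfies
`dist (f^[n (k+1)] x) x ≤ diam (B k) → 0`.
-/

open Filter Topology Metric Set

section NonWandering

variable {X : Type*}

def IsNonWandering [TopologicalSpace X] (f : X → X) : Prop :=
  ∀ U : Set X, IsOpen U → U.Nonempty → ∃ n : ℕ, 1 ≤ n ∧ (f^[n] '' U ∩ U).Nonempty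

namespace IsNonWandering

section Topological

variable [TopologicalSpace X] {f : X → X} {U : Set X}

lemma exists_iterate_mem (h : IsNonWandering f) (hU : IsOpen U) (hne : U.Nonempty) :
    ∃ n, 0 < n ∧ ∃ y ∈ U, f^[n] y ∈ U := by
  obtain ⟨n, hn, _, ⟨y, hy, rfl⟩, hfy⟩ := h U hU hne
  exact ⟨n, hn, y, hy, hfy⟩

lemma exists_lt_iterate_mem (h : IsNonWandering f) (hf : Continuous f) (hU : IsOpen U)
    (hne : U.Nonempty) (N : ℕ) : ∃ n, N < n ∧ ∃ y ∈ U, f^[n] y ∈ U := by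
  induction N generalizing U with
  | zero => exact h.exists_iterate_mem hU hne
  | succ N ih =>
    obtain ⟨n, hn, y, hy, hfy⟩ := ih hU hne
    have hV : IsOpen (U ∩ f^[n] ⁻¹' U) := hU.inter (hU.preimage (hf.iterate n))
    obtain ⟨m, hm, z, hz, hfz⟩ := ih hV ⟨y, hy, hfy⟩
    refine ⟨n + m, by omega, z, hz.1, ?_⟩
    rw [Function.iterate_add_apply]
    exact hfz.2

end Topological

section Metric

variable [MetricSpace X] {f : X → X}

lemma exists_lt_iterate_image_closure_subset (h : IsNonWandering f) (hf : Continuous f)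
    {U : Set X} (hU : IsOpen U) (hne : U.Nonempty) (N : ℕ) {ε : ℝ} (hε : 0 < ε) :
    ∃ n, N < n ∧ ∃ V : Set X, IsOpen V ∧ V.Nonempty ∧ diam (closure V) ≤ ε ∧
      closure V ⊆ U ∧ f^[n] '' closure V ⊆ U := by
  obtain ⟨n, hn, y, hy, hfy⟩ := h.exists_lt_iterate_mem hf hU hne N
  have hW : U ∩ f^[n] ⁻¹' U ∈ 𝓝 y :=
    (hU.inter (hU.preimage (hf.iterate n))).mem_nhds ⟨hy, hfy⟩
  obtain ⟨ρ, hρ, hρW⟩ := nhds_basis_closedBall.mem_iff.1 hW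
  set δ := min ρ (ε / 2)
  have hδ : 0 < δ := lt_min hρ (half_pos hε)
  have hclosure : closure (ball y δ) ⊆ closedBall y δ := closure_ball_subset_closedBall
  have hVW : closure (ball y δ) ⊆ U ∩ f^[n] ⁻¹' U :=
    hclosure.trans ((closedBall_subset_closedBall (min_le_left _ _)).trans hρW)
  refine ⟨n, hn, ball y δ, isOpen_ball, nonempty_ball.2 hδ, ?_,
    hVW.trans inter_subset_left, image_subset_iff.2 (hVW.trans inter_subset_right)⟩
  calc diam (closure (ball y δ))
      _ ≤ diam (closedBall y δ) := diam_mono hclosure isBounded_closedBall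
      _ ≤ 2 * δ := diam_closedBall hδ.le
      _ ≤ ε := by linarith [min_le_right ρ (ε / 2)]

lemma exists_nested_returning_seq (h : IsNonWandering f) (hf : Continuous f) {U₀ : Set X}
    (hU₀ : IsOpen U₀) (hne : U₀.Nonempty) :
    ∃ (U : ℕ → Set X) (ns : ℕ → ℕ), U 0 = U₀ ∧ StrictMono ns ∧
      ∀ k, (U (k + 1)).Nonempty ∧ diam (closure (U (k + 1))) ≤ 1 / (k + 1) ∧
        closure (U (k + 1)) ⊆ U k ∧ f^[ns (k + 1)] '' closure (U (k + 1)) ⊆ U k := by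
  choose n hn V hVo hVne hVdiam hVsub hVmaps using
    fun (p : {q : Set X × ℕ // IsOpen q.1 ∧ q.1.Nonempty}) (k : ℕ) =>
      h.exists_lt_iterate_image_closure_subset hf p.2.1 p.2.2 p.1.2
        (Nat.one_div_pos_of_nat (α := ℝ) (n := k))
  let seq : ℕ → {q : Set X × ℕ // IsOpen q.1 ∧ q.1.Nonempty} := fun k =>
    Nat.rec ⟨(U₀, 0), hU₀, hne⟩ (fun k p => ⟨(V p k, n p k), hVo p k, hVne p k⟩) k
  exact ⟨fun k => (seq k).1.1, fun k => (seq k).1.2, rfl,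
    strictMono_nat_of_lt_succ fun k => hn (seq k) k,
    fun k => ⟨hVne (seq k) k, hVdiam (seq k) k, hVsub (seq k) k, hVmaps (seq k) k⟩⟩

end Metric

end IsNonWandering

lemma exists_mem_tendsto_iterate_of_nested [MetricSpace X] [CompactSpace X] (f : X → X)
    (B : ℕ → Set X) (ns : ℕ → ℕ) (hclosed : ∀ k, IsClosed (B (k + 1)))
    (hne : ∀ k, (B (k + 1)).Nonempty) (hdiam : ∀ k, diam (B (k + 1)) ≤ 1 / (k + 1))
    (hsub : ∀ k, B (k + 1) ⊆ B k) (hmaps : ∀ k, f^[ns (k + 1)] '' B (k + 1) ⊆ B k) :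
    ∃ x, (∀ k, x ∈ B (k + 1)) ∧ Tendsto (fun k => f^[ns k] x) atTop (𝓝 x) := by
  obtain ⟨x, hx⟩ := IsCompact.nonempty_iInter_of_sequence_nonempty_isCompact_isClosed
    (fun k => B (k + 1)) (fun k => hsub (k + 1)) hne (hclosed 0).isCompact hclosed
  rw [mem_iInter] at hx
  refine ⟨x, hx, (tendsto_add_atTop_iff_nat 2).1 (tendsto_iff_dist_tendsto_zero.2 ?_)⟩
  refine squeeze_zero (fun _ => dist_nonneg) (fun k => ?_) tendsto_one_div_add_atTop_nhds_zero_nat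
  calc dist (f^[ns (k + 2)] x) x ≤ diam (B (k + 1)) :=
        dist_le_diam_of_mem (hclosed k).isCompact.isBounded
          (hmaps (k + 1) (mem_image_of_mem _ (hx (k + 1)))) (hx k)
    _ ≤ 1 / (k + 1) := hdiam k

end NonWandering

theorem nonwandering_nested_closed_sets {X : Type*} [MetricSpace X] [CompactSpace X]
    (f : X ≃ₜ X)
    (hnw : ∀ U : Set X, IsOpen U → U.Nonempty →
      ∃ n : ℕ, 1 ≤ n ∧ ((⇑f)^[n] '' U ∩ U).Nonempty)
    (x0 : X) (r : ℝ) (hr : 0 < r) :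
    ∃ (B : ℕ → Set X) (ns : ℕ → ℕ),
      B 0 = Metric.ball x0 r ∧ StrictMono ns ∧
      (∀ k, 1 ≤ k → IsClosed (B k) ∧ (B k).Nonempty ∧ Metric.diam (B k) ≤ 1 / (k : ℝ) ∧
        B k ⊆ B (k - 1) ∧ (⇑f)^[ns k] '' B k ⊆ B (k - 1)) ∧
      ∃ x : X, (∀ k, 1 ≤ k → x ∈ B k) ∧
        Tendsto (fun k => (⇑f)^[ns k] x) atTop (𝓝 x) := by
  obtain ⟨U, ns, hU0, hns, hU⟩ :=
    IsNonWandering.exists_nested_returning_seq hnw f.continuous isOpen_ball (nonempty_ball.2 hr)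
  let B : ℕ → Set X := fun
    | 0 => ball x0 r
    | k + 1 => closure (U (k + 1))
  have hUB : ∀ k, U k ⊆ B k
    | 0 => hU0.subset
    | _ + 1 => subset_closure
  have hsub : ∀ k, B (k + 1) ⊆ B k := fun k => (hU k).2.2.1.trans (hUB k)
  have hmaps : ∀ k, (⇑f)^[ns (k + 1)] '' B (k + 1) ⊆ B k :=
    fun k => (hU k).2.2.2.trans (hUB k)
  obtain ⟨x, hx, hlim⟩ := exists_mem_tendsto_iterate_of_nested f B ns
    (fun _ => isClosed_closure) (fun k => (hU k).1.closure) (fun k => (hU k).2.1) hsub hmaps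
  refine ⟨B, ns, rfl, hns, ?_, x, ?_, hlim⟩
  · rintro (_ | k) hk
    · omega
    · exact ⟨isClosed_closure, (hU k).1.closure, by exact_mod_cast (hU k).2.1, hsub k, hmaps k⟩
  · rintro (_ | k) hk
    · omega
    · exact hx k
end
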